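/- In Wyner's wiretap coding scheme, the following chain holds: if (U, B) → X → Z and Ẇ → (U, B) → Z are Markov chains, B is independent of (U, Ẇ), H(B) ≥ I(X; Z) − Nε, and H(B | Z, U) ≤ nδ, then I(U; Z | Ẇ) ≤ Nε + nδ. -/
import Mathlib


open Finset

section IT
variable {Ω : Type} [Fintype Ω]

/-- Probability that random variable `X` takes the value `x` under pmf `p`. -/
def pm {α : Type} [Fintype α] [DecidableEq α] (p : Ω → ℝ) (X : Ω → α) (x : α) : ℝ :=
  ∑ ω, if X ω = x then p ω else 0

/-- Shannon entropy (in bits) of random variable `X` under pmf `p`. -/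
noncomputable def ent {α : Type} [Fintype α] [DecidableEq α] (p : Ω → ℝ) (X : Ω → α) : ℝ :=
  -∑ x, pm p X x * Real.logb 2 (pm p X x)

/-- Mutual information `I(X;Y)` (in bits). -/
noncomputable def mi {α β : Type} [Fintype α] [DecidableEq α] [Fintype β] [DecidableEq β]
    (p : Ω → ℝ) (X : Ω → α) (Y : Ω → β) : ℝ :=
  ent p X + ent p Y - ent p (fun ω => (X ω, Y ω))

/-- Conditional entropy `H(X | Y)` (in bits). -/
noncomputable def condEnt {α β : Type} [Fintype α] [DecidableEq α] [Fintype β] [DecidableEq β]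
    (p : Ω → ℝ) (X : Ω → α) (Y : Ω → β) : ℝ :=
  ent p (fun ω => (X ω, Y ω)) - ent p Y

/-- Conditional mutual information `I(X;Y | Z)` (in bits). -/
noncomputable def cmi {α β γ : Type} [Fintype α] [DecidableEq α] [Fintype β] [DecidableEq β]
    [Fintype γ] [DecidableEq γ] (p : Ω → ℝ) (X : Ω → α) (Y : Ω → β) (Z : Ω → γ) : ℝ :=
  ent p (fun ω => (X ω, Z ω)) + ent p (fun ω => (Y ω, Z ω))
    - ent p (fun ω => (X ω, Y ω, Z ω)) - ent p Z

/-- `p` is a probability mass function on the finite sample space `Ω`. -/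
def IsPMF (p : Ω → ℝ) : Prop := (∀ ω, 0 ≤ p ω) ∧ ∑ ω, p ω = 1

/-- `X` and `Z` are conditionally independent given `Y` (i.e. `X → Y → Z` is a Markov chain). -/
def CondIndep {α β γ : Type} [Fintype α] [DecidableEq α] [Fintype β] [DecidableEq β]
    [Fintype γ] [DecidableEq γ] (p : Ω → ℝ) (X : Ω → α) (Z : Ω → γ) (Y : Ω → β) : Prop :=
  ∀ x z y, pm p (fun ω => (X ω, Z ω, Y ω)) (x, z, y) * pm p Y y =
    pm p (fun ω => (X ω, Y ω)) (x, y) * pm p (fun ω => (Z ω, Y ω)) (z, y)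

end IT


section Helpers
variable {Ω : Type} [Fintype Ω]
variable {α β γ : Type} [Fintype α] [DecidableEq α] [Fintype β] [DecidableEq β]
  [Fintype γ] [DecidableEq γ]

set_option linter.unusedSectionVars false

lemma pm_nonneg (p : Ω → ℝ) (hp : ∀ ω, 0 ≤ p ω) (X : Ω → α) (x : α) : 0 ≤ pm p X x :=
  Finset.sum_nonneg fun ω _ => by split <;> simp [hp ω]

lemma pm_sum (p : Ω → ℝ) (X : Ω → α) : ∑ x, pm p X x = ∑ ω, p ω := by
  unfold pm; rw [Finset.sum_comm]; simp

lemma pm_fst (p : Ω → ℝ) (X : Ω → α) (Y : Ω → β) (x : α) :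
    pm p X x = ∑ y, pm p (fun ω => (X ω, Y ω)) (x, y) := by
  unfold pm; rw [Finset.sum_comm]
  refine Finset.sum_congr rfl fun ω _ => ?_
  by_cases h : X ω = x <;> simp [h, Prod.ext_iff]

lemma pm_snd (p : Ω → ℝ) (X : Ω → α) (Y : Ω → β) (y : β) :
    pm p Y y = ∑ x, pm p (fun ω => (X ω, Y ω)) (x, y) := by
  unfold pm; rw [Finset.sum_comm]
  refine Finset.sum_congr rfl fun ω _ => ?_
  by_cases h : Y ω = y <;> simp [h, Prod.ext_iff]

lemma pm_mid (p : Ω → ℝ) (X : Ω → α) (Y : Ω → β) (Z : Ω → γ) (x : α) (z : γ) :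
    pm p (fun ω => (X ω, Z ω)) (x, z) = ∑ y, pm p (fun ω => (X ω, Y ω, Z ω)) (x, y, z) := by
  unfold pm; rw [Finset.sum_comm]
  refine Finset.sum_congr rfl fun ω _ => ?_
  by_cases h1 : X ω = x <;> by_cases h2 : Z ω = z <;> simp [h1, h2, Prod.ext_iff]

lemma pm_comp_inj (p : Ω → ℝ) (X : Ω → α) (f : α → β) (hf : Function.Injective f) (x : α) :
    pm p (fun ω => f (X ω)) (f x) = pm p X x := by
  unfold pm; refine Finset.sum_congr rfl fun ω _ => by simp [hf.eq_iff]

lemma pm_comp_not_mem (p : Ω → ℝ) (X : Ω → α) (f : α → β) (y : β) (hy : ∀ x, f x ≠ y) :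
    pm p (fun ω => f (X ω)) y = 0 := by
  unfold pm; refine Finset.sum_eq_zero fun ω _ => by simp [hy (X ω)]

lemma ent_eq_of_inj (p : Ω → ℝ) (X : Ω → α) (Y : Ω → β) (f : α → β)
    (hf : Function.Injective f) (hXY : ∀ ω, Y ω = f (X ω)) : ent p Y = ent p X := by
  have hY : Y = fun ω => f (X ω) := funext hXY
  subst hY
  unfold ent
  congr 1
  rw [← Finset.sum_subset (Finset.subset_univ (Finset.univ.image f))]
  · rw [Finset.sum_image (fun a _ b _ h => hf h)]
    refine Finset.sum_congr rfl fun x _ => by rw [pm_comp_inj p X f hf]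
  · intro y _ hy
    rw [pm_comp_not_mem p X f y]
    · simp
    · intro x hx; exact hy (Finset.mem_image.2 ⟨x, Finset.mem_univ x, hx⟩)
lemma cmi_expand (p : Ω → ℝ) (X : Ω → α) (Y : Ω → β) (Z : Ω → γ) :
    cmi p X Y Z = ∑ x, ∑ y, ∑ z,
      pm p (fun ω => (X ω, Y ω, Z ω)) (x, y, z) *
        (Real.logb 2 (pm p (fun ω => (X ω, Y ω, Z ω)) (x, y, z))
          + Real.logb 2 (pm p Z z)
          - Real.logb 2 (pm p (fun ω => (X ω, Z ω)) (x, z))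
          - Real.logb 2 (pm p (fun ω => (Y ω, Z ω)) (y, z))) := by
  have h1 : ent p (fun ω => (X ω, Y ω, Z ω))
      = -∑ x, ∑ y, ∑ z, pm p (fun ω => (X ω, Y ω, Z ω)) (x, y, z) *
          Real.logb 2 (pm p (fun ω => (X ω, Y ω, Z ω)) (x, y, z)) := by
    unfold ent; rw [Fintype.sum_prod_type]
    congr 1; refine Finset.sum_congr rfl fun x _ => ?_
    rw [Fintype.sum_prod_type]
  have h2 : ent p (fun ω => (X ω, Z ω))
      = -∑ x, ∑ y, ∑ z, pm p (fun ω => (X ω, Y ω, Z ω)) (x, y, z) *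
          Real.logb 2 (pm p (fun ω => (X ω, Z ω)) (x, z)) := by
    unfold ent; rw [Fintype.sum_prod_type]
    congr 1; refine Finset.sum_congr rfl fun x _ => ?_
    rw [Finset.sum_comm]
    refine Finset.sum_congr rfl fun z _ => ?_
    rw [pm_mid p X Y Z x z, Finset.sum_mul]
  have h3 : ent p (fun ω => (Y ω, Z ω))
      = -∑ x, ∑ y, ∑ z, pm p (fun ω => (X ω, Y ω, Z ω)) (x, y, z) *
          Real.logb 2 (pm p (fun ω => (Y ω, Z ω)) (y, z)) := by
    unfold ent; rw [Fintype.sum_prod_type]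
    rw [show (∑ x, ∑ y, ∑ z, pm p (fun ω => (X ω, Y ω, Z ω)) (x, y, z) *
          Real.logb 2 (pm p (fun ω => (Y ω, Z ω)) (y, z)))
        = ∑ y, ∑ z, ∑ x, pm p (fun ω => (X ω, Y ω, Z ω)) (x, y, z) *
          Real.logb 2 (pm p (fun ω => (Y ω, Z ω)) (y, z)) from by
        rw [Finset.sum_comm]
        exact Finset.sum_congr rfl fun y _ => Finset.sum_comm]
    congr 1; refine Finset.sum_congr rfl fun y _ => ?_
    refine Finset.sum_congr rfl fun z _ => ?_
    rw [pm_snd p X (fun ω => (Y ω, Z ω)) (y, z), Finset.sum_mul]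
  have h4 : ent p Z
      = -∑ x, ∑ y, ∑ z, pm p (fun ω => (X ω, Y ω, Z ω)) (x, y, z) *
          Real.logb 2 (pm p Z z) := by
    unfold ent
    rw [show (∑ x, ∑ y, ∑ z, pm p (fun ω => (X ω, Y ω, Z ω)) (x, y, z) *
          Real.logb 2 (pm p Z z))
        = ∑ z, ∑ x, ∑ y, pm p (fun ω => (X ω, Y ω, Z ω)) (x, y, z) *
          Real.logb 2 (pm p Z z) from by
        rw [show (∑ x, ∑ y, ∑ z, pm p (fun ω => (X ω, Y ω, Z ω)) (x, y, z) *
              Real.logb 2 (pm p Z z))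
            = ∑ x, ∑ z, ∑ y, pm p (fun ω => (X ω, Y ω, Z ω)) (x, y, z) *
              Real.logb 2 (pm p Z z) from
          Finset.sum_congr rfl fun _ _ => Finset.sum_comm]
        exact Finset.sum_comm]
    congr 1; refine Finset.sum_congr rfl fun z _ => ?_
    rw [pm_snd p X Z z, Finset.sum_mul]
    refine Finset.sum_congr rfl fun x _ => ?_
    rw [pm_mid p X Y Z x z, Finset.sum_mul]
  unfold cmi
  rw [h1, h2, h3, h4]
  simp only [mul_add, mul_sub, Finset.sum_add_distrib, Finset.sum_sub_distrib]
  ring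
-- marginal monotonicity helpers
lemma le_pm_XZ (p : Ω → ℝ) (hp : ∀ ω, 0 ≤ p ω) (X : Ω → α) (Y : Ω → β) (Z : Ω → γ)
    (x : α) (y : β) (z : γ) :
    pm p (fun ω => (X ω, Y ω, Z ω)) (x, y, z) ≤ pm p (fun ω => (X ω, Z ω)) (x, z) := by
  rw [pm_mid p X Y Z x z]
  exact Finset.single_le_sum
    (fun y' _ => pm_nonneg p hp (fun ω => (X ω, Y ω, Z ω)) (x, y', z)) (Finset.mem_univ y)

lemma le_pm_YZ (p : Ω → ℝ) (hp : ∀ ω, 0 ≤ p ω) (X : Ω → α) (Y : Ω → β) (Z : Ω → γ)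
    (x : α) (y : β) (z : γ) :
    pm p (fun ω => (X ω, Y ω, Z ω)) (x, y, z) ≤ pm p (fun ω => (Y ω, Z ω)) (y, z) := by
  rw [pm_snd p X (fun ω => (Y ω, Z ω)) (y, z)]
  exact Finset.single_le_sum
    (fun x' _ => pm_nonneg p hp (fun ω => (X ω, Y ω, Z ω)) (x', y, z)) (Finset.mem_univ x)

lemma pm_XZ_le_pm_Z (p : Ω → ℝ) (hp : ∀ ω, 0 ≤ p ω) (X : Ω → α) (Z : Ω → γ)
    (x : α) (z : γ) :
    pm p (fun ω => (X ω, Z ω)) (x, z) ≤ pm p Z z := by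
  rw [pm_snd p X Z z]
  exact Finset.single_le_sum
    (fun x' _ => pm_nonneg p hp (fun ω => (X ω, Z ω)) (x', z)) (Finset.mem_univ x)

lemma cmi_nonneg (p : Ω → ℝ) (hp : ∀ ω, 0 ≤ p ω) (X : Ω → α) (Y : Ω → β) (Z : Ω → γ) :
    0 ≤ cmi p X Y Z := by
  rw [cmi_expand]
  have hL : (0:ℝ) < Real.log 2 := Real.log_pos one_lt_two
  set q : α → β → γ → ℝ := fun x y z => pm p (fun ω => (X ω, Y ω, Z ω)) (x, y, z) with hqdef
  set b : α → β → γ → ℝ := fun x y z =>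
    pm p (fun ω => (X ω, Z ω)) (x, z) * pm p (fun ω => (Y ω, Z ω)) (y, z) / pm p Z z with hbdef
  have hqnn : ∀ x y z, 0 ≤ q x y z := fun x y z => pm_nonneg p hp _ _
  have hbnn : ∀ x y z, 0 ≤ b x y z := fun x y z =>
    div_nonneg (mul_nonneg (pm_nonneg p hp _ _) (pm_nonneg p hp _ _)) (pm_nonneg p hp _ _)
  -- pointwise bound
  have key : ∀ x y z, (q x y z - b x y z) / Real.log 2 ≤
      q x y z *
        (Real.logb 2 (q x y z) + Real.logb 2 (pm p Z z)
          - Real.logb 2 (pm p (fun ω => (X ω, Z ω)) (x, z))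
          - Real.logb 2 (pm p (fun ω => (Y ω, Z ω)) (y, z))) := by
    intro x y z
    rcases eq_or_lt_of_le (hqnn x y z) with h0 | hpos
    · rw [← h0]
      simp only [zero_mul, zero_sub]
      apply div_nonpos_of_nonpos_of_nonneg (by linarith [hbnn x y z]) hL.le
    · have hXZ : 0 < pm p (fun ω => (X ω, Z ω)) (x, z) :=
        lt_of_lt_of_le hpos (le_pm_XZ p hp X Y Z x y z)
      have hYZ : 0 < pm p (fun ω => (Y ω, Z ω)) (y, z) :=
        lt_of_lt_of_le hpos (le_pm_YZ p hp X Y Z x y z)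
      have hZ : 0 < pm p Z z := lt_of_lt_of_le hXZ (pm_XZ_le_pm_Z p hp X Z x z)
      have hbpos : 0 < b x y z := div_pos (mul_pos hXZ hYZ) hZ
      have hlog : Real.log (b x y z / q x y z) ≤ b x y z / q x y z - 1 :=
        Real.log_le_sub_one_of_pos (div_pos hbpos hpos)
      rw [Real.log_div hbpos.ne' hpos.ne'] at hlog
      have hb_log : Real.log (b x y z) =
          Real.log (pm p (fun ω => (X ω, Z ω)) (x, z)) +
          Real.log (pm p (fun ω => (Y ω, Z ω)) (y, z)) - Real.log (pm p Z z) := by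
        rw [hbdef]
        rw [Real.log_div (mul_pos hXZ hYZ).ne' hZ.ne', Real.log_mul hXZ.ne' hYZ.ne']
      have hmain : q x y z - b x y z ≤ q x y z * (Real.log (q x y z) - Real.log (b x y z)) := by
        have := mul_le_mul_of_nonneg_left hlog (hqnn x y z)
        have hq' : q x y z * (b x y z / q x y z - 1) = b x y z - q x y z := by
          field_simp
        nlinarith
      have expand : q x y z *
          (Real.logb 2 (q x y z) + Real.logb 2 (pm p Z z)
            - Real.logb 2 (pm p (fun ω => (X ω, Z ω)) (x, z))
            - Real.logb 2 (pm p (fun ω => (Y ω, Z ω)) (y, z)))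
          = q x y z * (Real.log (q x y z) - Real.log (b x y z)) / Real.log 2 := by
        simp only [Real.logb]
        rw [hb_log]
        ring
      rw [expand]
      gcongr
  -- sum of b over x, y is at most pm Z z
  have hsum_b : ∀ z, (∑ x, ∑ y, b x y z) ≤ pm p Z z := by
    intro z
    rcases eq_or_lt_of_le (pm_nonneg p hp Z z) with h0 | hZpos
    · have : ∀ x y, b x y z = 0 := by
        intro x y
        have h1 : pm p (fun ω => (X ω, Z ω)) (x, z) = 0 :=
          le_antisymm (le_trans (pm_XZ_le_pm_Z p hp X Z x z) (le_of_eq h0.symm))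
            (pm_nonneg p hp _ _)
        simp [hbdef, h1]
      simp [this, ← h0]
    · have : (∑ x, ∑ y, b x y z) = pm p Z z := by
        simp only [hbdef]
        rw [show (∑ x, ∑ y, pm p (fun ω => (X ω, Z ω)) (x, z) *
              pm p (fun ω => (Y ω, Z ω)) (y, z) / pm p Z z)
            = (∑ x, pm p (fun ω => (X ω, Z ω)) (x, z)) *
              (∑ y, pm p (fun ω => (Y ω, Z ω)) (y, z)) / pm p Z z from by
          rw [Finset.sum_mul, Finset.sum_div]
          refine Finset.sum_congr rfl fun x _ => ?_
          rw [Finset.mul_sum, Finset.sum_div]]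
        rw [← pm_snd p X Z z, ← pm_snd p Y Z z]
        field_simp
      linarith
  -- sum of q over x, y equals pm Z z
  have hsum_q : ∀ z, (∑ x, ∑ y, q x y z) = pm p Z z := by
    intro z
    rw [pm_snd p X Z z]
    refine Finset.sum_congr rfl fun x _ => ?_
    rw [pm_mid p X Y Z x z]
  -- put together
  have h2 : (∑ x, ∑ y, ∑ z, (q x y z - b x y z) / Real.log 2) ≤
      ∑ x, ∑ y, ∑ z, q x y z *
        (Real.logb 2 (q x y z) + Real.logb 2 (pm p Z z)
          - Real.logb 2 (pm p (fun ω => (X ω, Z ω)) (x, z))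
          - Real.logb 2 (pm p (fun ω => (Y ω, Z ω)) (y, z))) := by
    refine Finset.sum_le_sum fun x _ => Finset.sum_le_sum fun y _ => Finset.sum_le_sum
      fun z _ => key x y z
  have h3 : 0 ≤ ∑ x, ∑ y, ∑ z, (q x y z - b x y z) / Real.log 2 := by
    have hre : (∑ x, ∑ y, ∑ z, (q x y z - b x y z) / Real.log 2)
        = ∑ z, ((∑ x, ∑ y, q x y z) - (∑ x, ∑ y, b x y z)) / Real.log 2 := by
      rw [show (∑ x : α, ∑ y : β, ∑ z : γ, (q x y z - b x y z) / Real.log 2)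
          = ∑ z : γ, ∑ x : α, ∑ y : β, (q x y z - b x y z) / Real.log 2 from by
        rw [show (∑ x : α, ∑ y : β, ∑ z : γ, (q x y z - b x y z) / Real.log 2)
            = ∑ x : α, ∑ z : γ, ∑ y : β, (q x y z - b x y z) / Real.log 2 from
          Finset.sum_congr rfl fun _ _ => Finset.sum_comm]
        exact Finset.sum_comm]
      refine Finset.sum_congr rfl fun z _ => ?_
      simp only [sub_div, Finset.sum_sub_distrib, Finset.sum_div]
    rw [hre]
    apply Finset.sum_nonneg fun z _ => ?_
    apply div_nonneg _ hL.le
    rw [hsum_q z]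
    linarith [hsum_b z]
  linarith

lemma cmi_eq_zero_of_condIndep (p : Ω → ℝ) (hp : ∀ ω, 0 ≤ p ω)
    (X : Ω → α) (Z : Ω → γ) (Y : Ω → β) (h : CondIndep p X Z Y) :
    cmi p X Z Y = 0 := by
  rw [cmi_expand]
  refine Finset.sum_eq_zero fun x _ => Finset.sum_eq_zero fun z _ =>
    Finset.sum_eq_zero fun y _ => ?_
  rcases eq_or_lt_of_le (pm_nonneg p hp (fun ω => (X ω, Z ω, Y ω)) (x, z, y)) with h0 | hpos
  · rw [← h0, zero_mul]
  · have hXY : 0 < pm p (fun ω => (X ω, Y ω)) (x, y) :=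
      lt_of_lt_of_le hpos (le_pm_XZ p hp X Z Y x z y)
    have hZY : 0 < pm p (fun ω => (Z ω, Y ω)) (z, y) :=
      lt_of_lt_of_le hpos (le_pm_YZ p hp X Z Y x z y)
    have hY : 0 < pm p Y y := lt_of_lt_of_le hXY (pm_XZ_le_pm_Z p hp X Y x y)
    have heq := h x z y
    have : Real.logb 2 (pm p (fun ω => (X ω, Z ω, Y ω)) (x, z, y)) + Real.logb 2 (pm p Y y)
        = Real.logb 2 (pm p (fun ω => (X ω, Y ω)) (x, y))
          + Real.logb 2 (pm p (fun ω => (Z ω, Y ω)) (z, y)) := by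
      rw [← Real.logb_mul hpos.ne' hY.ne', ← Real.logb_mul hXY.ne' hZY.ne', heq]
    rw [show (Real.logb 2 (pm p (fun ω => (X ω, Z ω, Y ω)) (x, z, y)) + Real.logb 2 (pm p Y y)
        - Real.logb 2 (pm p (fun ω => (X ω, Y ω)) (x, y))
        - Real.logb 2 (pm p (fun ω => (Z ω, Y ω)) (z, y))) = 0 from by linarith]
    rw [mul_zero]
lemma ent_pair_of_indep (p : Ω → ℝ) (hp : IsPMF p) (B : Ω → α) (V : Ω → β)
    (h : ∀ b v, pm p (fun ω => (B ω, V ω)) (b, v) = pm p B b * pm p V v) :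
    ent p (fun ω => (B ω, V ω)) = ent p B + ent p V := by
  unfold ent
  rw [Fintype.sum_prod_type]
  have hPsum : ∑ b, pm p B b = 1 := by rw [pm_sum]; exact hp.2
  have hQsum : ∑ v, pm p V v = 1 := by rw [pm_sum]; exact hp.2
  have step : ∀ b v, pm p (fun ω => (B ω, V ω)) (b, v) *
      Real.logb 2 (pm p (fun ω => (B ω, V ω)) (b, v))
      = pm p B b * pm p V v * Real.logb 2 (pm p B b)
        + pm p B b * pm p V v * Real.logb 2 (pm p V v) := by
    intro b v
    rw [h b v]
    rcases eq_or_lt_of_le (pm_nonneg p hp.1 B b) with h0 | hb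
    · rw [← h0]; ring_nf
    rcases eq_or_lt_of_le (pm_nonneg p hp.1 V v) with h0 | hv
    · rw [← h0]; ring_nf
    rw [Real.logb_mul hb.ne' hv.ne']
    ring
  have : (∑ b, ∑ v, pm p (fun ω => (B ω, V ω)) (b, v) *
      Real.logb 2 (pm p (fun ω => (B ω, V ω)) (b, v)))
      = (∑ b, pm p B b * Real.logb 2 (pm p B b)) * (∑ v, pm p V v)
        + (∑ b, pm p B b) * (∑ v, pm p V v * Real.logb 2 (pm p V v)) := by
    rw [Finset.sum_mul_sum, Finset.sum_mul_sum, ← Finset.sum_add_distrib]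
    refine Finset.sum_congr rfl fun b _ => ?_
    rw [← Finset.sum_add_distrib]
    refine Finset.sum_congr rfl fun v _ => ?_
    rw [step b v]; ring
  rw [this, hPsum, hQsum]
  ring

lemma mi_nonneg (p : Ω → ℝ) (hp : IsPMF p) (X : Ω → α) (Y : Ω → β) :
    0 ≤ mi p X Y := by
  have h := cmi_nonneg p hp.1 X Y (fun _ => ())
  have e0 : ent p (fun _ : Ω => ()) = 0 := by
    unfold ent
    have : pm p (fun _ : Ω => ()) () = 1 := by unfold pm; simpa using hp.2
    simp [this]
  have e1 : ent p (fun ω => (X ω, ())) = ent p X :=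
    ent_eq_of_inj p X _ (fun x => (x, ())) (fun a b hab => by simpa using hab) (fun ω => rfl)
  have e2 : ent p (fun ω => (Y ω, ())) = ent p Y :=
    ent_eq_of_inj p Y _ (fun y => (y, ())) (fun a b hab => by simpa using hab) (fun ω => rfl)
  have e3 : ent p (fun ω => (X ω, Y ω, ())) = ent p (fun ω => (X ω, Y ω)) :=
    ent_eq_of_inj p (fun ω => (X ω, Y ω)) _ (fun q => (q.1, q.2, ()))
      (fun a b hab => by simpa [Prod.ext_iff] using hab) (fun ω => rfl)
  unfold cmi at h
  rw [e0, e1, e2, e3] at h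
  unfold mi
  linarith

end Helpers

/-- Wyner wiretap security chain. If `(U,B) → X → Z` and `Ẇ → (U,B) → Z` are
Markov chains, `B` is independent of `(U,Ẇ)`, `H(B) ≥ I(X;Z) − Nε`, and `H(B|Z,U) ≤ nδ`,
then `I(U;Z|Ẇ) ≤ Nε + nδ`. -/

theorem stmt12 {Ω υ βt χ ζ ωd : Type} [Fintype Ω] [Fintype υ] [DecidableEq υ]
    [Fintype βt] [DecidableEq βt] [Fintype χ] [DecidableEq χ]
    [Fintype ζ] [DecidableEq ζ] [Fintype ωd] [DecidableEq ωd]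
    (p : Ω → ℝ) (hp : IsPMF p)
    (U : Ω → υ) (B : Ω → βt) (X : Ω → χ) (Z : Ω → ζ) (Wdot : Ω → ωd)
    (N ε n δ : ℝ)
    (hMarkov1 : CondIndep p (fun ω => (U ω, B ω)) Z X)
    (hMarkov2 : CondIndep p Wdot Z (fun ω => (U ω, B ω)))
    (hIndep : ∀ b w, pm p (fun ω => (B ω, U ω, Wdot ω)) (b, w)
      = pm p B b * pm p (fun ω => (U ω, Wdot ω)) w)
    (hHB : ent p B ≥ mi p X Z - N * ε)
    (hBdec : condEnt p B (fun ω => (Z ω, U ω)) ≤ n * δ) :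
    cmi p U Z Wdot ≤ N * ε + n * δ := by
  have hp0 := hp.1
  have hM1 : cmi p (fun ω => (U ω, B ω)) Z X = 0 :=
    cmi_eq_zero_of_condIndep p hp0 _ _ _ hMarkov1
  have hM2 : cmi p Wdot Z (fun ω => (U ω, B ω)) = 0 :=
    cmi_eq_zero_of_condIndep p hp0 _ _ _ hMarkov2
  have hNN1 : 0 ≤ cmi p X Z (fun ω => (U ω, B ω)) := cmi_nonneg p hp0 _ _ _
  have hNN2 : 0 ≤ mi p Wdot Z := mi_nonneg p hp _ _
  have hNN3 : 0 ≤ cmi p B Wdot (fun ω => (Z ω, U ω)) := cmi_nonneg p hp0 _ _ _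
  have hInd : ent p (fun ω => (B ω, U ω, Wdot ω))
      = ent p B + ent p (fun ω => (U ω, Wdot ω)) :=
    ent_pair_of_indep p hp B (fun ω => (U ω, Wdot ω)) hIndep
  have g_a : ent p (fun ω => (Z ω, X ω)) = ent p (fun ω => (X ω, Z ω)) :=
    ent_eq_of_inj p _ _ (fun q => (q.2, q.1))
      (by rintro ⟨a, b⟩ ⟨c, d⟩ h; simp_all [Prod.ext_iff]) (fun ω => rfl)
  have g_b : ent p (fun ω => (Z ω, (U ω, B ω))) = ent p (fun ω => ((U ω, B ω), Z ω)) :=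
    ent_eq_of_inj p _ _ (fun q => (q.2, q.1))
      (by rintro ⟨a, b⟩ ⟨c, d⟩ h; simp_all [Prod.ext_iff]) (fun ω => rfl)
  have g_c : ent p (fun ω => (X ω, (U ω, B ω))) = ent p (fun ω => ((U ω, B ω), X ω)) :=
    ent_eq_of_inj p _ _ (fun q => (q.2, q.1))
      (by rintro ⟨a, b⟩ ⟨c, d⟩ h; simp_all [Prod.ext_iff]) (fun ω => rfl)
  have g_d : ent p (fun ω => (X ω, Z ω, (U ω, B ω)))
      = ent p (fun ω => ((U ω, B ω), Z ω, X ω)) :=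
    ent_eq_of_inj p _ _ (fun q => (q.2.2, q.2.1, q.1))
      (by rintro ⟨a, b, c⟩ ⟨d, e, f⟩ h; simp_all [Prod.ext_iff]) (fun ω => rfl)
  have g_e : ent p (fun ω => (Wdot ω, (U ω, B ω))) = ent p (fun ω => ((U ω, B ω), Wdot ω)) :=
    ent_eq_of_inj p _ _ (fun q => (q.2, q.1))
      (by rintro ⟨a, b⟩ ⟨c, d⟩ h; simp_all [Prod.ext_iff]) (fun ω => rfl)
  have g_f : ent p (fun ω => (Wdot ω, Z ω)) = ent p (fun ω => (Z ω, Wdot ω)) :=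
    ent_eq_of_inj p _ _ (fun q => (q.2, q.1))
      (by rintro ⟨a, b⟩ ⟨c, d⟩ h; simp_all [Prod.ext_iff]) (fun ω => rfl)
  have g_g : ent p (fun ω => (Wdot ω, Z ω, (U ω, B ω)))
      = ent p (fun ω => ((U ω, B ω), Z ω, Wdot ω)) :=
    ent_eq_of_inj p _ _ (fun q => (q.2.2, q.2.1, q.1))
      (by rintro ⟨a, b, c⟩ ⟨d, e, f⟩ h; simp_all [Prod.ext_iff]) (fun ω => rfl)
  have g_h : ent p (fun ω => ((U ω, B ω), Wdot ω))
      = ent p (fun ω => (B ω, U ω, Wdot ω)) :=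
    ent_eq_of_inj p _ _ (fun q => ((q.2.1, q.1), q.2.2))
      (by rintro ⟨a, b, c⟩ ⟨d, e, f⟩ h; simp_all [Prod.ext_iff]) (fun ω => rfl)
  have g_i : ent p (fun ω => (Z ω, U ω, Wdot ω)) = ent p (fun ω => (U ω, Z ω, Wdot ω)) :=
    ent_eq_of_inj p _ _ (fun q => (q.2.1, (q.1, q.2.2)))
      (by rintro ⟨a, b, c⟩ ⟨d, e, f⟩ h; simp_all [Prod.ext_iff]) (fun ω => rfl)
  have g_j : ent p (fun ω => ((U ω, B ω), Z ω, Wdot ω))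
      = ent p (fun ω => (B ω, Z ω, U ω, Wdot ω)) :=
    ent_eq_of_inj p _ _ (fun q => ((q.2.2.1, q.1), (q.2.1, q.2.2.2)))
      (by rintro ⟨a, b, c, d⟩ ⟨e, f, g, h'⟩ h; simp_all [Prod.ext_iff]) (fun ω => rfl)
  have g_k : ent p (fun ω => (B ω, Wdot ω, Z ω, U ω))
      = ent p (fun ω => (B ω, Z ω, U ω, Wdot ω)) :=
    ent_eq_of_inj p _ _ (fun q => (q.1, (q.2.2.2, (q.2.1, q.2.2.1))))
      (by rintro ⟨a, b, c, d⟩ ⟨e, f, g, h'⟩ h; simp_all [Prod.ext_iff]) (fun ω => rfl)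
  have g_l : ent p (fun ω => (Wdot ω, Z ω, U ω)) = ent p (fun ω => (Z ω, U ω, Wdot ω)) :=
    ent_eq_of_inj p _ _ (fun q => (q.2.2, (q.1, q.2.1)))
      (by rintro ⟨a, b, c⟩ ⟨d, e, f⟩ h; simp_all [Prod.ext_iff]) (fun ω => rfl)
  simp only [mi, cmi, condEnt] at hM1 hM2 hNN1 hNN2 hNN3 hHB hBdec ⊢
  linarith [hInd, g_a, g_b, g_c, g_d, g_e, g_f, g_g, g_h, g_i, g_j, g_k, g_l]
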